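/- arXiv:2407.01988 — 3 statements merged into one kernel-verified Lean document; each statement's English description precedes it below -/
import Mathlib

section
/- Let X be a type, let n be a natural number, and let f be a bijection of the set of n-tuples X^n = (Fin n → X) which is equivariant for the coordinate-permutation action of the symmetric group, i.e. f(v ∘ σ) = f(v) ∘ σ for every permutation σ of Fin n and every tuple v. Then f preserves the coincidence pattern of coordinates: for every tuple v and all indices i, j, one has f(v)(i) = f(v)(j) if and only if v(i) = v(j). In particular f preserves the multiplicity type (the partition recording the sizes of the blocks of equal coordinates) of every tuple. -/
theorem Function.comp_swap_eq_self_iff {α β : Type*} [DecidableEq α] (w : α → β) (i j : α) :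
    w ∘ Equiv.swap i j = w ↔ w i = w j := by
  refine ⟨fun h => by simpa using congrFun h j, fun h => funext fun k => ?_⟩
  rcases eq_or_ne k i with rfl | hki
  · simp [h]
  rcases eq_or_ne k j with rfl | hkj
  · simp [h]
  · simp [Equiv.swap_apply_of_ne_of_ne hki hkj]

/-- If `f` is a bijection of `Fin n → X` which is equivariant for the
coordinate-permutation action of the symmetric group (`f (v ∘ σ) = f v ∘ σ`), then `f`
preserves the coincidence pattern of coordinates: `f v i = f v j ↔ v i = v j`. -/
theorem equivariant_bijection_preserves_coincidence (X : Type*) (n : ℕ)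
    (f : (Fin n → X) ≃ (Fin n → X))
    (hf : ∀ (σ : Equiv.Perm (Fin n)) (v : Fin n → X), f (v ∘ σ) = f v ∘ σ)
    (v : Fin n → X) (i j : Fin n) :
    f v i = f v j ↔ v i = v j := by
  rw [← Function.comp_swap_eq_self_iff (f v), ← hf, f.apply_eq_iff_eq,
    Function.comp_swap_eq_self_iff]
end

section
/- Let d, f, a, c be integers satisfying d² − 2f² = 1, a² − 2c² = −2, and dc − af = 1. Then a = 2f and c = d. -/
/-!
Subtracting twice the first Pell equation from the second and adding four times the
determinant condition gives `(a - 2f)² = 2 (c - d)²`; since `2` is not a square, both sides vanish.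
-/

instance Zsqrtd.nonsquare_two : Zsqrtd.Nonsquare 2 :=
  ⟨fun n hn => by
    rcases n with _ | _ | n
    all_goals nlinarith⟩

lemma Int.eq_zero_of_sq_eq_two_mul_sq {x y : ℤ} (h : x ^ 2 = 2 * y ^ 2) : x = 0 ∧ y = 0 :=
  Zsqrtd.divides_sq_eq_zero_z (d := 2) (by push_cast; linear_combination h)

/-- If integers `d, f, a, c` satisfy `d² - 2f² = 1`, `a² - 2c² = -2`, and
`dc - af = 1`, then `a = 2f` and `c = d`. -/
theorem pell_matrix_det_one (d f a c : ℤ) (h1 : d ^ 2 - 2 * f ^ 2 = 1)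
    (h2 : a ^ 2 - 2 * c ^ 2 = -2) (h3 : d * c - a * f = 1) :
    a = 2 * f ∧ c = d := by
  have key : (a - 2 * f) ^ 2 = 2 * (c - d) ^ 2 := by
    linear_combination h2 - 2 * h1 + 4 * h3
  obtain ⟨ha, hc⟩ := Int.eq_zero_of_sq_eq_two_mul_sq key
  exact ⟨by linarith, by linarith⟩
end

section
/- Let d, f, a, c be integers satisfying d² − 2f² = 1, a² − 2c² = −2, and dc − af = −1. Then a = −2f and c = −d. -/
/-!
Read `d + f√n` and `a + c√n` as elements of norm `1` and `-n` in `ℤ[√n]`. Multiplicativity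
of the norm, in the form of Brahmagupta's identity, gives `(da - nfc)² - n(dc - af)² = -n`, so the
determinant condition `dc - af = -1` forces `da = nfc`. Together with `dc - af = -1` this is a
linear system in `(a, c)` of determinant `d² - nf² = 1`, whose unique solution is `(-nf, -d)`.
-/

section Pell

variable {R : Type*} [CommRing R]

theorem sq_sub_mul_sq_mul_sq_sub_mul_sq (n d f a c : R) :
    (d ^ 2 - n * f ^ 2) * (a ^ 2 - n * c ^ 2) =
      (d * a - n * f * c) ^ 2 - n * (d * c - a * f) ^ 2 := by
  ring

theorem mul_eq_mul_of_pell_of_det_eq_neg_one [NoZeroDivisors R] {n d f a c : R}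
    (hdf : d ^ 2 - n * f ^ 2 = 1) (hac : a ^ 2 - n * c ^ 2 = -n) (hdet : d * c - a * f = -1) :
    d * a = n * f * c := by
  have hsq : (d * a - n * f * c) ^ 2 = 0 := by
    linear_combination (-1 : R) * sq_sub_mul_sq_mul_sq_sub_mul_sq n d f a c
      + (a ^ 2 - n * c ^ 2) * hdf + hac + n * (d * c - a * f - 1) * hdet
  exact sub_eq_zero.mp (pow_eq_zero_iff two_ne_zero |>.mp hsq)

theorem eq_neg_mul_and_eq_neg_of_pell_of_det_eq_neg_one {n d f a c : R}
    (hdf : d ^ 2 - n * f ^ 2 = 1) (hda : d * a = n * f * c) (hdet : d * c - a * f = -1) :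
    a = -(n * f) ∧ c = -d :=
  ⟨by linear_combination (-a) * hdf + d * hda + n * f * hdet,
   by linear_combination (-c) * hdf + f * hda + d * hdet⟩

end Pell

/-- If integers `d, f, a, c` satisfy `d² - 2f² = 1`, `a² - 2c² = -2`, and
`dc - af = -1`, then `a = -2f` and `c = -d`. -/
theorem pell_matrix_det_neg_one (d f a c : ℤ) (h1 : d ^ 2 - 2 * f ^ 2 = 1)
    (h2 : a ^ 2 - 2 * c ^ 2 = -2) (h3 : d * c - a * f = -1) :
    a = -(2 * f) ∧ c = -d :=
  eq_neg_mul_and_eq_neg_of_pell_of_det_eq_neg_one h1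
    (mul_eq_mul_of_pell_of_det_eq_neg_one h1 h2 h3) h3
end
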